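/- arXiv:math/9606213 — 5 statements merged into one kernel-verified Lean document; each statement's English description precedes it below -/
import Mathlib

section
/- There exists an absolute constant C > 0 such that the following holds. Let W be an n-dimensional linear subspace of ℝ^M, let a₁, …, a_M be real numbers, and define the seminorm ‖x‖_E = (Σ_{i=1}^M x(i)² · a_i²)^{1/2} on ℝ^M. Then for every ε > 0, one has ε · √(log N(B₂^M ∩ W, ‖·‖_E, ε)) ≤ C · ‖P_W : ℓ₁^M → ℓ₂^M‖ · (Σ_{i=1}^M a_i²)^{1/2}. -/
/-- The covering number `N(B, d, ε)`: the minimal number of (closed) balls of radius `ε`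
in the (quasi/semi-)metric `d`, with centers in `B`, needed to cover `B`. -/
noncomputable def coveringNumber {α : Type*} (B : Set α) (d : α → α → ℝ) (ε : ℝ) : ℕ∞ :=
  ⨅ (s : Finset α) (_ : ↑s ⊆ B) (_ : ∀ x ∈ B, ∃ c ∈ s, d x c ≤ ε), (s.card : ℕ∞)


set_option maxHeartbeats 1000000

open MeasureTheory Finset ENNReal

local notation "⟪" x ", " y "⟫" => inner (𝕜 := ℝ) x y

lemma lemB {ι : Type*} [Fintype ι] [DecidableEq ι] (t : ι → ℝ) (ε : ℝ) (hε : 0 < ε)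
    (ht : ∀ i, ε/4 ≤ t i) :
    ∃ s : Finset (ι → ℝ), (↑s ⊆ {x : ι → ℝ | ∑ i, x i ^2 ≤ 1}) ∧
      (∀ x : ι → ℝ, (∑ i, x i ^2 ≤ 1) →
        ∃ c ∈ s, ∑ i, t i ^2 * (x i - c i)^2 ≤ 3/4 * ε^2) ∧
      ((s.card : ℝ) ≤ ∏ i, (14 * t i / ε)) := by
  classical
  have htpos : ∀ i, 0 < t i := fun i => lt_of_lt_of_le (by linarith) (ht i)
  have hεne : ε ≠ 0 := ne_of_gt hε
  have h3 : Real.sqrt 3 ^ 2 = 3 := Real.sq_sqrt (by norm_num)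
  have h3pos : (0:ℝ) < Real.sqrt 3 := Real.sqrt_pos.mpr (by norm_num)
  set δ : ι → ℝ := fun i => Real.sqrt 3 * ε / (4 * t i) with hδdef
  have hδpos : ∀ i, 0 < δ i := fun i =>
    div_pos (mul_pos h3pos hε) (mul_pos (by norm_num) (htpos i))
  have hδne : ∀ i, δ i ≠ 0 := fun i => ne_of_gt (hδpos i)
  have htne : ∀ i, t i ≠ 0 := fun i => ne_of_gt (htpos i)
  have hδsq : ∀ i, t i ^2 * δ i ^ 2 = 3/16 * ε^2 := fun i => by
    have hti := htne i
    simp only [hδdef]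
    rw [div_pow, mul_pow, mul_pow, h3]
    field_simp
    ring
  have hδle : ∀ i, δ i ^2 ≤ 3 := fun i => by
    have h4 : ε^2 ≤ 16 * t i ^2 := by nlinarith [ht i, hε]
    nlinarith [hδsq i, mul_pos (htpos i) (htpos i), sq_nonneg (δ i)]
  set Bset : Set (ι → ℝ) := {x | ∑ i, x i ^2 ≤ 1} with hBset
  set U : Set (ι → ℝ) := {u | ∑ i, u i ^2 < 1} with hU
  set Q : Set (ι → ℝ) := {q | ∑ i, (q i / δ i) ^ 2 < 1} with hQ
  have hQmem : ∀ q ∈ Q, (∑ i, q i ^2 < 3) ∧ (∑ i, t i ^2 * q i ^2 < 3/16 * ε^2) := by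
    intro q hq
    simp only [hQ, Set.mem_setOf_eq] at hq
    have hsum_nonneg : (0:ℝ) ≤ ∑ i, (q i / δ i)^2 :=
      Finset.sum_nonneg fun i _ => sq_nonneg _
    constructor
    · calc ∑ i, q i ^2 = ∑ i, δ i ^2 * (q i / δ i)^2 := by
            refine Finset.sum_congr rfl fun i _ => ?_
            have := hδne i
            field_simp
      _ ≤ ∑ i, 3 * (q i / δ i)^2 :=
            Finset.sum_le_sum fun i _ => mul_le_mul_of_nonneg_right (hδle i) (sq_nonneg _)
      _ = 3 * ∑ i, (q i / δ i)^2 := by rw [Finset.mul_sum]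
      _ < 3 := by nlinarith
    · calc ∑ i, t i ^2 * q i ^2 = ∑ i, (3/16 * ε^2) * (q i / δ i)^2 := by
            refine Finset.sum_congr rfl fun i _ => ?_
            rw [← hδsq i]
            have := hδne i
            field_simp
      _ = (3/16 * ε^2) * ∑ i, (q i / δ i)^2 := by rw [Finset.mul_sum]
      _ < 3/16 * ε^2 := by nlinarith [mul_pos hε hε]
  have hQopen : IsOpen Q := by
    have : Continuous (fun q : ι → ℝ => ∑ i, (q i / δ i)^2) := by fun_prop
    exact isOpen_lt this continuous_const
  set D : (ι → ℝ) →ₗ[ℝ] (ι → ℝ) := Matrix.toLin' (Matrix.diagonal δ) with hD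
  have hDapp : ∀ u : ι → ℝ, ∀ i, D u i = δ i * u i := by
    intro u i
    simp [hD, Matrix.toLin'_apply, Matrix.mulVec_diagonal]
  have hQimg : Q = D '' U := by
    ext q
    simp only [hQ, hU, Set.mem_setOf_eq, Set.mem_image]
    constructor
    · intro hq
      refine ⟨fun i => q i / δ i, hq, ?_⟩
      ext i
      rw [hDapp]
      field_simp [hδne i]
    · rintro ⟨u, hu, rfl⟩
      have he : ∀ i, (D u i / δ i)^2 = u i ^2 := fun i => by
        rw [hDapp]
        field_simp [hδne i]
      simpa [he] using hu
  have hdet : |LinearMap.det D| = ∏ i, δ i := by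
    rw [hD, LinearMap.det_toLin', Matrix.det_diagonal]
    exact abs_of_pos (Finset.prod_pos fun i _ => hδpos i)
  have hUopen : IsOpen U := by
    have : Continuous (fun q : ι → ℝ => ∑ i, q i ^2) := by fun_prop
    exact isOpen_lt this continuous_const
  have hU0 : (0 : ι → ℝ) ∈ U := by simp [hU]
  have hUpos : 0 < volume U := hUopen.measure_pos volume ⟨0, hU0⟩
  have hUfin : volume U < ⊤ := by
    have hsub : U ⊆ Metric.closedBall 0 1 := by
      intro u hu
      simp only [hU, Set.mem_setOf_eq] at hu
      simp only [Metric.mem_closedBall, dist_zero_right]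
      rw [pi_norm_le_iff_of_nonneg (by norm_num)]
      intro i
      have h2 : u i ^2 ≤ 1 := by
        refine le_trans ?_ hu.le
        exact Finset.single_le_sum (f := fun i => u i ^2) (fun j _ => sq_nonneg _)
          (Finset.mem_univ i)
      rw [Real.norm_eq_abs]
      nlinarith [abs_nonneg (u i), sq_abs (u i)]
    exact lt_of_le_of_lt (measure_mono hsub) (isCompact_closedBall _ _).measure_lt_top
  set Big : Set (ι → ℝ) := {x | ∑ i, x i ^2 ≤ 9} with hBig
  have hBigvol : volume Big ≤ ENNReal.ofReal (6 ^ Fintype.card ι) * volume U := by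
    have hsub : Big ⊆ ((6:ℝ) • (LinearMap.id : (ι → ℝ) →ₗ[ℝ] (ι → ℝ))) '' U := by
      intro z hz
      simp only [hBig, Set.mem_setOf_eq] at hz
      refine ⟨fun i => z i / 6, ?_, ?_⟩
      · simp only [hU, Set.mem_setOf_eq]
        have he : ∑ i, (z i / 6)^2 = (∑ i, z i ^2) / 36 := by
          rw [Finset.sum_div]
          exact Finset.sum_congr rfl fun i _ => by ring
        rw [he]
        linarith
      · ext i
        simp only [LinearMap.smul_apply, LinearMap.id_coe, id_eq, Pi.smul_apply, smul_eq_mul]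
        ring
    calc volume Big ≤ volume (((6:ℝ) • (LinearMap.id : (ι → ℝ) →ₗ[ℝ] (ι → ℝ))) '' U) :=
          measure_mono hsub
      _ = ENNReal.ofReal |LinearMap.det ((6:ℝ) • (LinearMap.id : (ι → ℝ) →ₗ[ℝ] (ι → ℝ)))|
            * volume U := Measure.addHaar_image_linearMap _ _ _
      _ = ENNReal.ofReal (6 ^ Fintype.card ι) * volume U := by
          rw [LinearMap.det_smul, LinearMap.det_id, Module.finrank_pi]
          norm_num
  have volB : ∀ s : Finset (ι → ℝ), ↑s ⊆ Bset →
      (∀ c ∈ s, ∀ c' ∈ s, c ≠ c' → 3/4 * ε^2 ≤ ∑ i, t i ^2 * (c i - c' i)^2) →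
      (s.card : ℝ) ≤ ∏ i, (14 * t i / ε) := by
    intro s hsB hsep
    have hdisj : (↑s : Set (ι → ℝ)).PairwiseDisjoint (fun c => (fun u => c + u) '' Q) := by
      intro c hc c' hc' hne
      simp only [Function.onFun]
      rw [Set.disjoint_left]
      rintro z ⟨q, hq, rfl⟩ ⟨q', hq', heq⟩
      have hcoord : ∀ i, c i - c' i = q' i - q i := by
        intro i
        have := congrFun heq i
        simp only [Pi.add_apply] at this
        linarith
      have hlt : ∑ i, t i ^2 * (c i - c' i)^2 < 3/4 * ε^2 := by
        have hexp : ∀ i, t i ^2 * (c i - c' i)^2 ≤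
            2 * (t i ^2 * q i ^2) + 2 * (t i ^2 * q' i ^2) := by
          intro i
          rw [hcoord i]
          nlinarith [sq_nonneg (q i + q' i), sq_nonneg (t i)]
        calc ∑ i, t i ^2 * (c i - c' i)^2
            ≤ ∑ i, (2 * (t i ^2 * q i ^2) + 2 * (t i ^2 * q' i ^2)) :=
              Finset.sum_le_sum fun i _ => hexp i
          _ = 2 * (∑ i, t i ^2 * q i ^2) + 2 * (∑ i, t i ^2 * q' i ^2) := by
              rw [Finset.sum_add_distrib, Finset.mul_sum, Finset.mul_sum]
          _ < 3/4 * ε^2 := by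
              have h1 := (hQmem q hq).2
              have h2 := (hQmem q' hq').2
              linarith
      exact absurd (hsep c (by exact_mod_cast hc) c' (by exact_mod_cast hc') hne)
        (not_le.mpr hlt)
    have himgpre : ∀ c : ι → ℝ, (fun u => c + u) '' Q = (fun x => -c + x) ⁻¹' Q := by
      intro c
      ext x
      simp only [Set.mem_image, Set.mem_preimage]
      constructor
      · rintro ⟨q, hq, rfl⟩; simpa using hq
      · intro hx; exact ⟨-c + x, hx, by abel⟩
    have hmeas : ∀ c ∈ s, MeasurableSet ((fun u => c + u) '' Q) := by
      intro c _
      rw [himgpre c]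
      exact hQopen.measurableSet.preimage (by fun_prop)
    have htrans : ∀ c : ι → ℝ, volume ((fun u => c + u) '' Q) = volume Q := by
      intro c
      rw [himgpre c]
      exact measure_preimage_add volume _ _
    have hsubBig : (⋃ c ∈ s, (fun u => c + u) '' Q) ⊆ Big := by
      intro z hz
      simp only [Set.mem_iUnion] at hz
      obtain ⟨c, hc, q, hq, rfl⟩ := hz
      have hcB : ∑ i, c i ^2 ≤ 1 := hsB hc
      have hqQ : ∑ i, q i ^2 < 3 := (hQmem q hq).1
      have hcs : (∑ i, c i * q i)^2 ≤ (∑ i, c i ^2) * (∑ i, q i ^2) :=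
        Finset.sum_mul_sq_le_sq_mul_sq _ _ _
      have hqnn : (0:ℝ) ≤ ∑ i, q i ^2 := Finset.sum_nonneg fun i _ => sq_nonneg _
      have hcnn : (0:ℝ) ≤ ∑ i, c i ^2 := Finset.sum_nonneg fun i _ => sq_nonneg _
      have hcq : (∑ i, c i * q i) ≤ 2 := by nlinarith [hcs, hcB, hqQ, hqnn, hcnn]
      simp only [hBig, Set.mem_setOf_eq, Pi.add_apply]
      have hexpand : ∑ i, (c i + q i)^2
          = ∑ i, c i ^2 + 2 * ∑ i, c i * q i + ∑ i, q i ^2 := by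
        rw [Finset.mul_sum, ← Finset.sum_add_distrib, ← Finset.sum_add_distrib]
        exact Finset.sum_congr rfl fun i _ => by ring
      rw [hexpand]
      linarith
    have hQvol : volume Q = ENNReal.ofReal (∏ i, δ i) * volume U := by
      rw [hQimg, Measure.addHaar_image_linearMap, hdet]
    have hconst : ∑ _c ∈ s, (ENNReal.ofReal (∏ i, δ i) * volume U)
        = (s.card : ℝ≥0∞) * (ENNReal.ofReal (∏ i, δ i) * volume U) := by
      rw [Finset.sum_const, nsmul_eq_mul]
    have hchain : (s.card : ℝ≥0∞) * (ENNReal.ofReal (∏ i, δ i) * volume U) ≤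
        ENNReal.ofReal (6 ^ Fintype.card ι) * volume U := by
      rw [← hconst]
      calc ∑ _c ∈ s, (ENNReal.ofReal (∏ i, δ i) * volume U)
          = ∑ c ∈ s, volume ((fun u => c + u) '' Q) :=
            (Finset.sum_congr rfl (fun c _ => ((htrans c).trans hQvol))).symm
        _ = volume (⋃ c ∈ s, (fun u => c + u) '' Q) := (measure_biUnion_finset hdisj hmeas).symm
        _ ≤ volume Big := measure_mono hsubBig
        _ ≤ ENNReal.ofReal (6 ^ Fintype.card ι) * volume U := hBigvol
    have hcancel : (s.card : ℝ≥0∞) * ENNReal.ofReal (∏ i, δ i) ≤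
        ENNReal.ofReal (6 ^ Fintype.card ι) := by
      rw [← ENNReal.mul_le_mul_iff_left hUpos.ne' hUfin.ne, mul_assoc]
      exact hchain
    have hδprodpos : (0:ℝ) < ∏ i, δ i := Finset.prod_pos fun i _ => hδpos i
    have hreal : (s.card : ℝ) * (∏ i, δ i) ≤ 6 ^ Fintype.card ι := by
      have h1 : ENNReal.ofReal ((s.card : ℝ) * ∏ i, δ i) ≤
          ENNReal.ofReal ((6:ℝ) ^ Fintype.card ι) := by
        rw [ENNReal.ofReal_mul (by positivity), ENNReal.ofReal_natCast]
        exact hcancel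
      exact (ENNReal.ofReal_le_ofReal_iff (by positivity)).mp h1
    have hfactor : ∀ i, (6:ℝ) ≤ 14 * t i / ε * δ i := by
      intro i
      have hti := htne i
      have he : 14 * t i / ε * δ i = 7 * Real.sqrt 3 / 2 := by
        show 14 * t i / ε * (Real.sqrt 3 * ε / (4 * t i)) = _
        field_simp
        ring
      rw [he]
      nlinarith [h3, h3pos]
    have h6 : ((6:ℝ)) ^ Fintype.card ι ≤ (∏ i, (14 * t i / ε)) * ∏ i, δ i := by
      rw [← Finset.prod_mul_distrib]
      calc ((6:ℝ)) ^ Fintype.card ι = ∏ _i : ι, (6:ℝ) := by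
            rw [Finset.prod_const, Finset.card_univ]
        _ ≤ ∏ i, (14 * t i / ε * δ i) :=
            Finset.prod_le_prod (fun i _ => by norm_num) (fun i _ => hfactor i)
    exact le_of_mul_le_mul_right (le_trans hreal h6) hδprodpos
  -- maximal packing
  set K := ∏ i, (14 * t i / ε) with hK
  set n₀ := Nat.floor K with hn₀
  set pred : ℕ → Prop := fun c => ∃ s : Finset (ι → ℝ), (↑s ⊆ Bset ∧
      (∀ c1 ∈ s, ∀ c2 ∈ s, c1 ≠ c2 → 3/4 * ε^2 ≤ ∑ i, t i ^2 * (c1 i - c2 i)^2)) ∧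
      s.card = c with hpred
  have hpred0 : pred 0 := ⟨∅, ⟨by simp, by simp⟩, rfl⟩
  have hcard_le : ∀ s : Finset (ι → ℝ), ↑s ⊆ Bset →
      (∀ c1 ∈ s, ∀ c2 ∈ s, c1 ≠ c2 → 3/4 * ε^2 ≤ ∑ i, t i ^2 * (c1 i - c2 i)^2) →
      s.card ≤ n₀ := fun s h1 h2 => Nat.le_floor (volB s h1 h2)
  have hspec : pred (Nat.findGreatest pred n₀) :=
    Nat.findGreatest_spec (Nat.zero_le n₀) hpred0
  obtain ⟨s₀, ⟨hs₀B, hs₀sep⟩, hs₀card⟩ := hspec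
  refine ⟨s₀, hs₀B, ?_, volB s₀ hs₀B hs₀sep⟩
  intro x hx
  by_contra hcon
  push_neg at hcon
  have hxs : x ∉ s₀ := by
    intro hxm
    have h0 : ∑ i, t i ^2 * (x i - x i)^2 = 0 := by simp
    have hc := hcon x hxm
    rw [h0] at hc
    nlinarith [mul_pos hε hε]
  set s₁ := insert x s₀ with hs₁
  have hs₁B : ↑s₁ ⊆ Bset := by
    rw [hs₁, Finset.coe_insert]
    exact Set.insert_subset hx hs₀B
  have hs₁sep : ∀ c1 ∈ s₁, ∀ c2 ∈ s₁, c1 ≠ c2 →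
      3/4 * ε^2 ≤ ∑ i, t i ^2 * (c1 i - c2 i)^2 := by
    intro c1 hc1 c2 hc2 hne
    rw [hs₁, Finset.mem_insert] at hc1 hc2
    rcases hc1 with rfl | hc1
    · rcases hc2 with rfl | hc2
      · exact absurd rfl hne
      · exact (hcon c2 hc2).le
    · rcases hc2 with rfl | hc2
      · have h := (hcon c1 hc1).le
        calc 3/4 * ε^2 ≤ ∑ i, t i ^2 * (c2 i - c1 i)^2 := h
          _ = ∑ i, t i ^2 * (c1 i - c2 i)^2 :=
            Finset.sum_congr rfl fun i _ => by ring
      · exact hs₀sep c1 hc1 c2 hc2 hne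
  have hs₁card : s₁.card = s₀.card + 1 := Finset.card_insert_of_notMem hxs
  have hgt : Nat.findGreatest pred n₀ < s₀.card + 1 := by
    rw [hs₀card]
    omega
  exact Nat.findGreatest_is_greatest hgt
    (by rw [← hs₁card]; exact hcard_le s₁ hs₁B hs₁sep)
    ⟨s₁, ⟨hs₁B, hs₁sep⟩, hs₁card.symm ▸ rfl⟩


lemma lemA {m : ℕ} (t : Fin m → ℝ) (htnn : ∀ i, 0 ≤ t i) (ε : ℝ) (hε : 0 < ε) :
    ∃ s : Finset (Fin m → ℝ), (↑s ⊆ {x : Fin m → ℝ | ∑ i, x i ^2 ≤ 1}) ∧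
      (∀ x : Fin m → ℝ, (∑ i, x i ^2 ≤ 1) →
        ∃ c ∈ s, ∑ i, t i ^2 * (x i - c i)^2 ≤ ε^2) ∧
      ((s.card : ℝ) ≤ Real.exp ((40/ε^2) * ∑ i, t i ^2)) := by
  classical
  set p : Fin m → Prop := fun i => ε/4 ≤ t i with hp
  have hsplit : ∀ f : Fin m → ℝ,
      ∑ i, f i = (∑ j : {i // p i}, f j) + ∑ j : {i // ¬ p i}, f j :=
    fun f => (Fintype.sum_subtype_add_sum_subtype p f).symm
  obtain ⟨s', hs'B, hs'cov, hs'card⟩ := lemB (ι := {i // p i}) (fun j => t j.1) ε hε (fun j => j.2)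
  set ext : ({i // p i} → ℝ) → (Fin m → ℝ) :=
    fun y i => if h : p i then y ⟨i, h⟩ else 0 with hext
  have hext_at : ∀ y : {i // p i} → ℝ, ∀ j : {i // p i}, ext y j.1 = y j := by
    intro y j
    simp only [hext]
    rw [dif_pos j.2]
  have hext_not : ∀ y : {i // p i} → ℝ, ∀ i : Fin m, ¬ p i → ext y i = 0 := by
    intro y i hi
    simp only [hext]
    rw [dif_neg hi]
  refine ⟨s'.image ext, ?_, ?_, ?_⟩
  · -- subset of ball
    intro c hc
    simp only [Finset.coe_image, Set.mem_image, Finset.mem_coe] at hc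
    obtain ⟨c', hc', rfl⟩ := hc
    have hc'B : ∑ j : {i // p i}, c' j ^2 ≤ 1 := hs'B hc'
    simp only [Set.mem_setOf_eq]
    rw [hsplit (fun i => ext c' i ^2)]
    have h1 : (∑ j : {i // p i}, ext c' j.1 ^2) = ∑ j : {i // p i}, c' j ^2 :=
      Finset.sum_congr rfl fun j _ => by rw [hext_at]
    have h2 : (∑ j : {i // ¬ p i}, ext c' j.1 ^2) = 0 :=
      Finset.sum_eq_zero fun j _ => by
        rw [hext_not c' j.1 j.2]
        norm_num
    rw [h1, h2]
    linarith
  · -- covering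
    intro x hx
    have hrx : ∑ j : {i // p i}, x j.1 ^2 ≤ 1 := by
      have := hsplit (fun i => x i ^2)
      have hnn : (0:ℝ) ≤ ∑ j : {i // ¬ p i}, x j.1 ^2 :=
        Finset.sum_nonneg fun j _ => sq_nonneg _
      linarith
    obtain ⟨c', hc's, hc'cov⟩ := hs'cov (fun j => x j.1) hrx
    refine ⟨ext c', Finset.mem_image_of_mem ext hc's, ?_⟩
    rw [hsplit (fun i => t i ^2 * (x i - ext c' i)^2)]
    have h1 : (∑ j : {i // p i}, t j.1 ^2 * (x j.1 - ext c' j.1)^2) ≤ 3/4 * ε^2 := by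
      refine le_trans (le_of_eq (Finset.sum_congr rfl fun j _ => ?_)) hc'cov
      rw [hext_at]
    have h2 : (∑ j : {i // ¬ p i}, t j.1 ^2 * (x j.1 - ext c' j.1)^2) ≤ ε^2/16 := by
      have hterm : ∀ j : {i // ¬ p i},
          t j.1 ^2 * (x j.1 - ext c' j.1)^2 ≤ ε^2/16 * x j.1 ^2 := by
        intro j
        have hnp : ¬ p j.1 := j.2
        rw [hext_not c' j.1 hnp]
        have htlt : t j.1 < ε/4 := by
          simp only [hp] at hnp
          linarith [not_le.mp hnp]
        have : t j.1 ^2 ≤ ε^2/16 := by nlinarith [htnn j.1]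
        nlinarith [sq_nonneg (x j.1)]
      calc (∑ j : {i // ¬ p i}, t j.1 ^2 * (x j.1 - ext c' j.1)^2)
          ≤ ∑ j : {i // ¬ p i}, ε^2/16 * x j.1 ^2 :=
            Finset.sum_le_sum (fun j _ => hterm j)
        _ = ε^2/16 * ∑ j : {i // ¬ p i}, x j.1 ^2 := by rw [Finset.mul_sum]
        _ ≤ ε^2/16 * 1 := by
            have h1le : (∑ j : {i // ¬ p i}, x j.1 ^2) ≤ 1 := by
              have := hsplit (fun i => x i ^2)
              have hnnA : (0:ℝ) ≤ ∑ j : {i // p i}, x j.1 ^2 :=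
                Finset.sum_nonneg fun j _ => sq_nonneg _
              linarith
            nlinarith [mul_pos hε hε]
        _ = ε^2/16 := by ring
    nlinarith [sq_nonneg ε, h1, h2]
  · -- cardinality
    have hcard1 : ((s'.image ext).card : ℝ) ≤ (s'.card : ℝ) := by
      exact_mod_cast Finset.card_image_le
    have hterm : ∀ j : {i // p i}, 14 * t j.1 / ε ≤ Real.exp (40/ε^2 * t j.1 ^2) := by
      intro j
      have hu : ε/4 ≤ t j.1 := j.2
      have hexp : 40/ε^2 * t j.1 ^2 + 1 ≤ Real.exp (40/ε^2 * t j.1 ^2) :=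
        Real.add_one_le_exp _
      have hε2 : (0:ℝ) < ε^2 := by positivity
      have key : 40/ε^2 * t j.1 ^2 + 1 - 14 * t j.1 / ε
          = (40 * t j.1^2 + ε^2 - 14 * t j.1 * ε) / ε^2 := by
        field_simp
      have hnum : (0:ℝ) ≤ 40 * t j.1^2 + ε^2 - 14 * t j.1 * ε := by
        nlinarith [mul_nonneg (by linarith : (0:ℝ) ≤ 4 * t j.1 - ε)
          (by linarith [htnn j.1, hε] : (0:ℝ) ≤ 10 * t j.1 - ε)]
      have h2 : (0:ℝ) ≤ 40/ε^2 * t j.1 ^2 + 1 - 14 * t j.1 / ε := by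
        rw [key]
        positivity
      linarith
    have hprod : (∏ j : {i // p i}, (14 * t j.1 / ε)) ≤
        Real.exp (∑ j : {i // p i}, 40/ε^2 * t j.1 ^2) := by
      rw [Real.exp_sum]
      refine Finset.prod_le_prod (fun j _ => ?_) (fun j _ => hterm j)
      have := htnn j.1
      positivity
    have hsum : (∑ j : {i // p i}, 40/ε^2 * t j.1 ^2) ≤ (40/ε^2) * ∑ i, t i ^2 := by
      rw [Finset.mul_sum]
      have h := hsplit (fun i => 40/ε^2 * t i ^2)
      have hnn : (0:ℝ) ≤ ∑ j : {i // ¬ p i}, 40/ε^2 * t j.1 ^2 :=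
        Finset.sum_nonneg fun j _ => by positivity
      linarith
    calc ((s'.image ext).card : ℝ) ≤ (s'.card : ℝ) := hcard1
      _ ≤ ∏ j : {i // p i}, (14 * t j.1 / ε) := hs'card
      _ ≤ Real.exp (∑ j : {i // p i}, 40/ε^2 * t j.1 ^2) := hprod
      _ ≤ Real.exp ((40/ε^2) * ∑ i, t i ^2) := Real.exp_le_exp.mpr hsum


lemma normsq_eu {M : ℕ} (y : EuclideanSpace ℝ (Fin M)) : ‖y‖^2 = ∑ k, (y k)^2 := by
  rw [EuclideanSpace.norm_eq, Real.sq_sqrt (Finset.sum_nonneg fun k _ => sq_nonneg _)]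
  exact Finset.sum_congr rfl fun k _ => by rw [Real.norm_eq_abs, sq_abs]


lemma hs_basis_indep {n M : ℕ} (L : EuclideanSpace ℝ (Fin n) →ₗ[ℝ] EuclideanSpace ℝ (Fin M))
    (b : OrthonormalBasis (Fin n) ℝ (EuclideanSpace ℝ (Fin n))) :
    ∑ i, ‖L (b i)‖^2 = ∑ k, ‖(LinearMap.adjoint L) (EuclideanSpace.single k (1:ℝ))‖^2 := by
  have h1 : ∀ i, ‖L (b i)‖^2
      = ∑ k, ⟪b i, (LinearMap.adjoint L) (EuclideanSpace.single k (1:ℝ))⟫^2 := by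
    intro i
    rw [normsq_eu]
    refine Finset.sum_congr rfl fun k _ => ?_
    rw [LinearMap.adjoint_inner_right]
    rw [show ⟪L (b i), EuclideanSpace.single k (1:ℝ)⟫ = L (b i) k from ?_]
    · rw [EuclideanSpace.inner_single_right]
      simp
  rw [Finset.sum_congr rfl fun i _ => h1 i, Finset.sum_comm]
  refine Finset.sum_congr rfl fun k _ => ?_
  set w := (LinearMap.adjoint L) (EuclideanSpace.single k (1:ℝ)) with hw
  have h2 : ∑ i, ⟪b i, w⟫^2 = ⟪w, w⟫ := by
    rw [← b.sum_inner_mul_inner w w]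
    exact Finset.sum_congr rfl fun i _ => by rw [real_inner_comm w (b i)]; ring
  rw [h2, real_inner_self_eq_norm_sq]


lemma lemML {n M : ℕ} (L : EuclideanSpace ℝ (Fin n) →ₗ[ℝ] EuclideanSpace ℝ (Fin M))
    (ε : ℝ) (hε : 0 < ε) :
    ∃ s : Finset (EuclideanSpace ℝ (Fin n)),
      (↑s ⊆ Metric.closedBall (0 : EuclideanSpace ℝ (Fin n)) 1) ∧
      (∀ x ∈ Metric.closedBall (0 : EuclideanSpace ℝ (Fin n)) 1, ∃ c ∈ s, ‖L x - L c‖ ≤ ε) ∧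
      ((s.card : ℝ) ≤ Real.exp ((40/ε^2) *
        ∑ j, ‖L (EuclideanSpace.single j (1:ℝ))‖^2)) := by
  classical
  set T := LinearMap.adjoint L ∘ₗ L with hTdef
  have hT : T.IsSymmetric := by
    intro x y
    rw [hTdef]
    simp only [LinearMap.comp_apply]
    rw [LinearMap.adjoint_inner_left, LinearMap.adjoint_inner_right]
  have hn : Module.finrank ℝ (EuclideanSpace ℝ (Fin n)) = n := finrank_euclideanSpace_fin
  set v := hT.eigenvectorBasis hn with hv
  set μ := hT.eigenvalues hn with hμ
  have hnorm1 : ∀ i, ‖v i‖ = 1 := fun i => v.orthonormal.1 i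
  have htsq : ∀ i, ‖L (v i)‖^2 = μ i := by
    intro i
    have h1 : ⟪v i, T (v i)⟫ = ‖L (v i)‖^2 := by
      rw [hTdef, LinearMap.comp_apply, LinearMap.adjoint_inner_right,
        real_inner_self_eq_norm_sq]
    have h2 : ⟪v i, T (v i)⟫ = μ i := by
      rw [hT.apply_eigenvectorBasis, real_inner_smul_right, real_inner_self_eq_norm_sq,
        hnorm1 i]
      norm_num
      rfl
    rw [← h1, h2]
  have hkey : ∀ z : EuclideanSpace ℝ (Fin n),
      ‖L z‖^2 = ∑ i, ‖L (v i)‖^2 * (v.repr z i)^2 := by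
    intro z
    have h1 : ⟪z, T z⟫ = ‖L z‖^2 := by
      rw [hTdef, LinearMap.comp_apply, LinearMap.adjoint_inner_right,
        real_inner_self_eq_norm_sq]
    have h2 : T z = ∑ i, (μ i * v.repr z i) • v i := by
      conv_lhs => rw [← v.sum_repr z]
      rw [map_sum]
      refine Finset.sum_congr rfl fun i _ => ?_
      rw [_root_.map_smul, hT.apply_eigenvectorBasis, smul_smul, mul_comm]
      norm_cast
    rw [← h1, h2, inner_sum]
    refine Finset.sum_congr rfl fun i _ => ?_
    rw [real_inner_smul_right, htsq i, v.repr_apply_apply, real_inner_comm]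
    ring
  -- apply lemA
  obtain ⟨sA, hsAB, hsAcov, hsAcard⟩ := lemA (fun i => ‖L (v i)‖) (fun i => norm_nonneg _) ε hε
  set toE : (Fin n → ℝ) → EuclideanSpace ℝ (Fin n) := fun z => (WithLp.equiv 2 (Fin n → ℝ)).symm z with htoE
  have htoE_apply : ∀ (z : Fin n → ℝ) (i : Fin n), toE z i = z i := fun z i => rfl
  set f : (Fin n → ℝ) → EuclideanSpace ℝ (Fin n) := fun z => v.repr.symm (toE z) with hf
  refine ⟨sA.image f, ?_, ?_, ?_⟩
  · intro c hc
    simp only [Finset.coe_image, Set.mem_image, Finset.mem_coe] at hc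
    obtain ⟨cA, hcA, rfl⟩ := hc
    have hcAB : ∑ i, cA i ^2 ≤ 1 := hsAB hcA
    simp only [Metric.mem_closedBall, dist_zero_right, hf]
    rw [LinearIsometryEquiv.norm_map]
    have : ‖toE cA‖ = Real.sqrt (∑ i, cA i ^2) := by
      rw [EuclideanSpace.norm_eq]
      congr 1
      exact Finset.sum_congr rfl fun i _ => by
        rw [htoE_apply, Real.norm_eq_abs, sq_abs]
    rw [this]
    calc Real.sqrt (∑ i, cA i ^2) ≤ Real.sqrt 1 := Real.sqrt_le_sqrt hcAB
      _ = 1 := Real.sqrt_one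
  · intro x hx
    simp only [Metric.mem_closedBall, dist_zero_right] at hx
    have hxhat : ∑ i, (v.repr x i) ^2 ≤ 1 := by
      have : ∑ i, (v.repr x i)^2 = ‖v.repr x‖^2 := (normsq_eu (v.repr x)).symm
      rw [this, LinearIsometryEquiv.norm_map]
      nlinarith [norm_nonneg x]
    obtain ⟨cA, hcA, hcov⟩ := hsAcov (fun i => v.repr x i) hxhat
    refine ⟨f cA, Finset.mem_image_of_mem f hcA, ?_⟩
    have hrepr : ∀ i, v.repr (f cA) i = cA i := by
      intro i
      rw [hf]
      simp only [LinearIsometryEquiv.apply_symm_apply]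
      exact htoE_apply cA i
    have hsub : ‖L x - L (f cA)‖^2 ≤ ε^2 := by
      rw [← map_sub, hkey (x - f cA)]
      refine le_trans (le_of_eq (Finset.sum_congr rfl fun i _ => ?_)) hcov
      rw [map_sub]
      simp only [PiLp.sub_apply]
      rw [hrepr i]
    nlinarith [norm_nonneg (L x - L (f cA)), hε]
  · calc ((sA.image f).card : ℝ) ≤ (sA.card : ℝ) := by exact_mod_cast Finset.card_image_le
      _ ≤ Real.exp ((40/ε^2) * ∑ i, ‖L (v i)‖^2) := hsAcard
      _ = Real.exp ((40/ε^2) * ∑ j, ‖L (EuclideanSpace.single j (1:ℝ))‖^2) := by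
          rw [hs_basis_indep L v, ← hs_basis_indep L (EuclideanSpace.basisFun (Fin n) ℝ)]
          congr 2
          exact Finset.sum_congr rfl fun j _ => by rw [EuclideanSpace.basisFun_apply]


/-- STATEMENT 3: There is an absolute constant `C > 0` such that for every `n`-dimensional
subspace `W ⊆ ℝ^M` with orthogonal projection `P_W` (characterized by `P x ∈ W`,
`x - P x ⊥ W`), reals `a₁,…,a_M` defining the seminorm `‖x‖_E = (∑ᵢ xᵢ²aᵢ²)^{1/2}`, and
every `ε > 0`,
`ε·√(log N(B₂^M ∩ W, ‖·‖_E, ε)) ≤ C·‖P_W : ℓ₁^M → ℓ₂^M‖·(∑ᵢ aᵢ²)^{1/2}`, where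
`‖P_W : ℓ₁^M → ℓ₂^M‖ = max_j ‖P_W eⱼ‖₂`. -/theorem stmt3 :
    ∃ C : ℝ, 0 < C ∧
      ∀ (n M : ℕ)
        (W : Submodule ℝ (Fin M → ℝ)), Module.finrank ℝ W = n →
      ∀ (a : Fin M → ℝ)
        (P : (Fin M → ℝ) →ₗ[ℝ] (Fin M → ℝ)),
        (∀ x, P x ∈ W) →
        (∀ x, ∀ w ∈ W, ∑ i, (x i - P x i) * w i = 0) →
      ∀ ε : ℝ, 0 < ε →
        ε * Real.sqrt (Real.log (((coveringNumber
              ({x : Fin M → ℝ | Real.sqrt (∑ i, (x i) ^ 2) ≤ 1} ∩ (W : Set (Fin M → ℝ)))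
              (fun x y => Real.sqrt (∑ i, (x i - y i) ^ 2 * (a i) ^ 2)) ε).toNat : ℝ))) ≤
          C * (⨆ j : Fin M, Real.sqrt (∑ i, (P (Pi.single j 1) i) ^ 2))
            * Real.sqrt (∑ i, (a i) ^ 2) := by

  refine ⟨7, by norm_num, ?_⟩
  intro n M W hW a P hPW hOrth ε hε
  classical
  set e : EuclideanSpace ℝ (Fin M) ≃ₗ[ℝ] (Fin M → ℝ) := WithLp.linearEquiv 2 ℝ (Fin M → ℝ)
    with he
  have he_apply : ∀ (y : EuclideanSpace ℝ (Fin M)) (i : Fin M), e y i = y i := fun y i => rfl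
  have hesymm_apply : ∀ (x : Fin M → ℝ) (i : Fin M), e.symm x i = x i := fun x i => rfl
  set W' : Submodule ℝ (EuclideanSpace ℝ (Fin M)) :=
    W.map (e.symm : (Fin M → ℝ) →ₗ[ℝ] EuclideanSpace ℝ (Fin M)) with hW'
  have hmemW' : ∀ y : EuclideanSpace ℝ (Fin M), y ∈ W' ↔ e y ∈ W := by
    intro y
    rw [hW']
    rw [show ((e.symm : (Fin M → ℝ) →ₗ[ℝ] EuclideanSpace ℝ (Fin M)))
        = (e.symm : (Fin M → ℝ) ≃ₗ[ℝ] EuclideanSpace ℝ (Fin M)).toLinearMap from rfl]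
    rw [Submodule.mem_map_equiv, LinearEquiv.symm_symm]
  have hrank' : Module.finrank ℝ W' = n := by
    rw [hW', LinearEquiv.finrank_map_eq]
    exact hW
  set u : OrthonormalBasis (Fin n) ℝ W' :=
    (stdOrthonormalBasis ℝ W').reindex (finCongr hrank') with hu
  set Ta : EuclideanSpace ℝ (Fin M) →ₗ[ℝ] EuclideanSpace ℝ (Fin M) :=
    (e.symm : (Fin M → ℝ) →ₗ[ℝ] EuclideanSpace ℝ (Fin M)) ∘ₗ
      (Matrix.toLin' (Matrix.diagonal a)) ∘ₗ (e : EuclideanSpace ℝ (Fin M) →ₗ[ℝ] (Fin M → ℝ))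
    with hTadef
  have hTa : ∀ (y : EuclideanSpace ℝ (Fin M)) (i : Fin M), Ta y i = a i * y i := by
    intro y i
    rw [hTadef]
    simp only [LinearMap.comp_apply, LinearEquiv.coe_coe]
    rw [hesymm_apply]
    simp [Matrix.toLin'_apply, Matrix.mulVec_diagonal, he_apply]
  set L : EuclideanSpace ℝ (Fin n) →ₗ[ℝ] EuclideanSpace ℝ (Fin M) :=
    Ta ∘ₗ W'.subtype ∘ₗ u.repr.symm.toLinearEquiv.toLinearMap with hL
  have hLapp : ∀ z : EuclideanSpace ℝ (Fin n),
      L z = Ta ((u.repr.symm z : W') : EuclideanSpace ℝ (Fin M)) := fun z => rfl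
  have hnorm_eu : ∀ y : EuclideanSpace ℝ (Fin M), ‖y‖ = Real.sqrt (∑ i, (y i)^2) := by
    intro y
    rw [EuclideanSpace.norm_eq]
    congr 1
    exact Finset.sum_congr rfl fun i _ => by rw [Real.norm_eq_abs, sq_abs]
  -- pe
  set pe : Fin M → (Fin M → ℝ) := fun i => P (Pi.single i 1) with hpe
  have hpe'W : ∀ i, e.symm (pe i) ∈ W' := by
    intro i
    rw [hmemW', LinearEquiv.apply_symm_apply]
    exact hPW _
  have hsingle_sum : ∀ (w : Fin M → ℝ) (i : Fin M), ∑ k, (Pi.single i 1 : Fin M → ℝ) k * w k = w i := by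
    intro w i
    simp [Pi.single_apply, ite_mul, Finset.sum_ite_eq]
  have hcol : ∀ (j : Fin n) (i : Fin M),
      ((u j : EuclideanSpace ℝ (Fin M))) i = ∑ k, pe i k * ((u j : EuclideanSpace ℝ (Fin M))) k := by
    intro j i
    have hwW : e ((u j : EuclideanSpace ℝ (Fin M))) ∈ W := (hmemW' _).mp (u j).2
    have h := hOrth (Pi.single i 1) (e ((u j : EuclideanSpace ℝ (Fin M)))) hwW
    simp only [sub_mul] at h
    rw [Finset.sum_sub_distrib] at h
    have hs := hsingle_sum (e ((u j : EuclideanSpace ℝ (Fin M)))) i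
    have hcoord : ∀ k, e ((u j : EuclideanSpace ℝ (Fin M))) k
        = ((u j : EuclideanSpace ℝ (Fin M))) k := fun k => he_apply _ k
    rw [hcoord] at hs
    have h2 : ∑ k, pe i k * ((u j : EuclideanSpace ℝ (Fin M))) k
        = ∑ k, (P (Pi.single i 1)) k * e ((u j : EuclideanSpace ℝ (Fin M))) k := by
      refine Finset.sum_congr rfl fun k _ => ?_
      rw [hcoord k, hpe]
    rw [h2]
    have h3 : ∑ k, (Pi.single i 1 : Fin M → ℝ) k * e ((u j : EuclideanSpace ℝ (Fin M))) k
        = ((u j : EuclideanSpace ℝ (Fin M))) i := by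
      rw [← hs]
    linarith [h, h3]
  have hinner_eu : ∀ x y : EuclideanSpace ℝ (Fin M), ⟪x, y⟫ = ∑ k, x k * y k := by
    intro x y
    rw [PiLp.inner_apply]
    exact Finset.sum_congr rfl fun k _ => by
      simp [RCLike.inner_apply]
      ring
  have hPar : ∀ w : W', ∑ j, (⟪((w : EuclideanSpace ℝ (Fin M))), ((u j : EuclideanSpace ℝ (Fin M)))⟫)^2
      = ‖(w : EuclideanSpace ℝ (Fin M))‖^2 := by
    intro w
    have h := u.sum_inner_mul_inner w w
    have hterm : ∀ j, (⟪w, u j⟫) * (⟪u j, w⟫)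
        = (⟪((w : EuclideanSpace ℝ (Fin M))), ((u j : EuclideanSpace ℝ (Fin M)))⟫)^2 := by
      intro j
      rw [real_inner_comm w (u j), Submodule.coe_inner]
      ring
    rw [← real_inner_self_eq_norm_sq, ← Submodule.coe_inner, ← h]
    exact (Finset.sum_congr rfl fun j _ => hterm j).symm
  have hcolsum : ∀ i, ∑ j, (((u j : EuclideanSpace ℝ (Fin M))) i)^2 = ∑ k, (pe i k)^2 := by
    intro i
    have hp := hPar ⟨e.symm (pe i), hpe'W i⟩
    have hIP : ∀ j, ⟪(e.symm (pe i)), ((u j : EuclideanSpace ℝ (Fin M)))⟫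
        = ((u j : EuclideanSpace ℝ (Fin M))) i := by
      intro j
      rw [hinner_eu]
      have hh : ∑ k, (e.symm (pe i)) k * ((u j : EuclideanSpace ℝ (Fin M))) k
          = ∑ k, pe i k * ((u j : EuclideanSpace ℝ (Fin M))) k :=
        Finset.sum_congr rfl fun k _ => by rw [hesymm_apply]
      rw [hh, ← hcol j i]
    have hlhs : ∑ j, (⟪(e.symm (pe i)), ((u j : EuclideanSpace ℝ (Fin M)))⟫)^2
        = ∑ j, (((u j : EuclideanSpace ℝ (Fin M))) i)^2 :=
      Finset.sum_congr rfl fun j _ => by rw [hIP j]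
    have hrhs : ‖(e.symm (pe i) : EuclideanSpace ℝ (Fin M))‖^2 = ∑ k, (pe i k)^2 := by
      rw [normsq_eu]
      exact Finset.sum_congr rfl fun k _ => by rw [hesymm_apply]
    rw [← hlhs, ← hrhs]
    exact hp
  -- the HS bound
  have hLj : ∀ j, L (EuclideanSpace.single j (1:ℝ))
      = Ta ((u j : EuclideanSpace ℝ (Fin M))) := by
    intro j
    rw [hLapp]
    congr 2
    exact u.repr_symm_single j
  have hSsq_eq : (∑ j, ‖L (EuclideanSpace.single j (1:ℝ))‖^2)
      = ∑ i, a i^2 * ∑ k, (pe i k)^2 := by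
    calc ∑ j, ‖L (EuclideanSpace.single j (1:ℝ))‖^2
        = ∑ j, ∑ i, (a i * ((u j : EuclideanSpace ℝ (Fin M))) i)^2 := by
          refine Finset.sum_congr rfl fun j _ => ?_
          rw [hLj j, normsq_eu]
          exact Finset.sum_congr rfl fun i _ => by rw [hTa]
      _ = ∑ i, ∑ j, (a i * ((u j : EuclideanSpace ℝ (Fin M))) i)^2 := Finset.sum_comm
      _ = ∑ i, a i^2 * ∑ j, (((u j : EuclideanSpace ℝ (Fin M))) i)^2 := by
          refine Finset.sum_congr rfl fun i _ => ?_
          rw [Finset.mul_sum]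
          exact Finset.sum_congr rfl fun j _ => by ring
      _ = ∑ i, a i^2 * ∑ k, (pe i k)^2 :=
          Finset.sum_congr rfl fun i _ => by rw [hcolsum i]
  set sup := ⨆ j : Fin M, Real.sqrt (∑ i, (P (Pi.single j 1) i) ^ 2) with hsup
  have hsup_nonneg : 0 ≤ sup := Real.iSup_nonneg fun j => Real.sqrt_nonneg _
  have hpe_le : ∀ i, ∑ k, (pe i k)^2 ≤ sup^2 := by
    intro i
    have h1 : Real.sqrt (∑ k, (pe i k)^2) ≤ sup := by
      rw [hsup]
      simp only [hpe]
      exact le_ciSup (f := fun j => Real.sqrt (∑ i, (P (Pi.single j 1) i) ^ 2))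
        (Set.Finite.bddAbove (Set.finite_range _)) i
    have hnn : (0:ℝ) ≤ ∑ k, (pe i k)^2 := Finset.sum_nonneg fun k _ => sq_nonneg _
    have h2 := Real.sq_sqrt hnn
    nlinarith [Real.sqrt_nonneg (∑ k, (pe i k)^2)]
  have hSsq_nonneg : (0:ℝ) ≤ ∑ j, ‖L (EuclideanSpace.single j (1:ℝ))‖^2 :=
    Finset.sum_nonneg fun j _ => sq_nonneg _
  have hSsq_le : (∑ j, ‖L (EuclideanSpace.single j (1:ℝ))‖^2) ≤ sup^2 * ∑ i, (a i)^2 := by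
    rw [hSsq_eq, Finset.mul_sum]
    refine Finset.sum_le_sum fun i _ => ?_
    calc a i^2 * ∑ k, (pe i k)^2 ≤ a i^2 * sup^2 :=
          mul_le_mul_of_nonneg_left (hpe_le i) (sq_nonneg _)
      _ = sup^2 * (a i)^2 := by ring
  -- get the cover from lemML
  obtain ⟨s, hsB, hscov, hscard⟩ := lemML L ε hε
  set g : EuclideanSpace ℝ (Fin n) → (Fin M → ℝ) :=
    fun z => e ((u.repr.symm z : W') : EuclideanSpace ℝ (Fin M)) with hg
  have hs'B : ↑(s.image g) ⊆
      ({x : Fin M → ℝ | Real.sqrt (∑ i, (x i) ^ 2) ≤ 1} ∩ (W : Set (Fin M → ℝ))) := by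
    intro c hc
    simp only [Finset.coe_image, Set.mem_image, Finset.mem_coe] at hc
    obtain ⟨z, hz, rfl⟩ := hc
    have hzb : ‖z‖ ≤ 1 := by
      have := hsB hz
      rwa [Metric.mem_closedBall, dist_zero_right] at this
    constructor
    · show Real.sqrt (∑ i, (g z i)^2) ≤ 1
      have h1 : ∑ i, (g z i)^2
          = ∑ i, ((((u.repr.symm z : W') : EuclideanSpace ℝ (Fin M))) i)^2 :=
        Finset.sum_congr rfl fun i _ => by
          simp only [hg]
          rw [he_apply]
      rw [h1, ← normsq_eu]
      have h2 : ‖((u.repr.symm z : W') : EuclideanSpace ℝ (Fin M))‖ = ‖z‖ := by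
        rw [← Submodule.coe_norm, LinearIsometryEquiv.norm_map]
      rw [h2, Real.sqrt_sq (norm_nonneg z)]
      exact hzb
    · show g z ∈ W
      exact (hmemW' _).mp (u.repr.symm z).2
  have hs'cov : ∀ x ∈ ({x : Fin M → ℝ | Real.sqrt (∑ i, (x i) ^ 2) ≤ 1} ∩
      (W : Set (Fin M → ℝ))), ∃ c ∈ (s.image g),
      Real.sqrt (∑ i, (x i - c i) ^ 2 * (a i) ^ 2) ≤ ε := by
    intro x hx
    obtain ⟨hx1, hx2⟩ := hx
    have hx1' : Real.sqrt (∑ i, (x i)^2) ≤ 1 := hx1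
    have hxW' : e.symm x ∈ W' := by
      rw [hmemW', LinearEquiv.apply_symm_apply]
      exact hx2
    set xw : W' := ⟨e.symm x, hxW'⟩ with hxw
    set z := u.repr xw with hz
    have hzb : z ∈ Metric.closedBall (0 : EuclideanSpace ℝ (Fin n)) 1 := by
      rw [Metric.mem_closedBall, dist_zero_right, hz, LinearIsometryEquiv.norm_map,
        Submodule.coe_norm]
      have : ‖(xw : EuclideanSpace ℝ (Fin M))‖ = Real.sqrt (∑ i, (x i)^2) := by
        rw [hnorm_eu]
        congr 1
      rw [this]
      exact hx1'
    obtain ⟨c, hcs, hLc⟩ := hscov z hzb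
    refine ⟨g c, Finset.mem_image_of_mem g hcs, ?_⟩
    have hLz : L z = Ta (e.symm x) := by
      rw [hLapp, hz, LinearIsometryEquiv.symm_apply_apply]
    have hgc : e.symm (g c) = ((u.repr.symm c : W') : EuclideanSpace ℝ (Fin M)) := by
      simp only [hg]
      rw [LinearEquiv.symm_apply_apply]
    have hLc2 : L c = Ta (e.symm (g c)) := by
      rw [hLapp, hgc]
    have heq : ‖L z - L c‖ = Real.sqrt (∑ i, (x i - g c i) ^ 2 * (a i) ^ 2) := by
      rw [hLz, hLc2, ← map_sub, hnorm_eu]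
      congr 1
      refine Finset.sum_congr rfl fun i _ => ?_
      rw [hTa]
      have hsubi : (e.symm x - e.symm (g c)) i = x i - g c i := by
        rw [PiLp.sub_apply, hesymm_apply, hesymm_apply]
      rw [hsubi]
      ring
    rw [← heq]
    exact hLc
  -- covering number bound
  have hcovN : coveringNumber
      ({x : Fin M → ℝ | Real.sqrt (∑ i, (x i) ^ 2) ≤ 1} ∩ (W : Set (Fin M → ℝ)))
      (fun x y => Real.sqrt (∑ i, (x i - y i) ^ 2 * (a i) ^ 2)) ε
      ≤ ((s.image g).card : ℕ∞) := by
    refine le_trans (iInf_le _ (s.image g)) ?_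
    exact le_trans (iInf_le _ hs'B) (iInf_le _ hs'cov)
  set N := (coveringNumber
      ({x : Fin M → ℝ | Real.sqrt (∑ i, (x i) ^ 2) ≤ 1} ∩ (W : Set (Fin M → ℝ)))
      (fun x y => Real.sqrt (∑ i, (x i - y i) ^ 2 * (a i) ^ 2)) ε).toNat with hN
  have hNnat : N ≤ (s.image g).card := by
    rw [hN]
    have h := ENat.toNat_le_toNat hcovN (by simp)
    simpa using h
  have hε2 : (0:ℝ) < ε^2 := by positivity
  have hlog : Real.log (N : ℝ) ≤ (40/ε^2) * ∑ j, ‖L (EuclideanSpace.single j (1:ℝ))‖^2 := by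
    rcases Nat.eq_zero_or_pos N with h0 | hpos
    · rw [h0]
      simp only [Nat.cast_zero, Real.log_zero]
      positivity
    · have h1 : (0:ℝ) < (N : ℝ) := by exact_mod_cast hpos
      rw [Real.log_le_iff_le_exp h1]
      calc (N:ℝ) ≤ ((s.image g).card : ℝ) := by exact_mod_cast hNnat
        _ ≤ (s.card : ℝ) := by exact_mod_cast Finset.card_image_le
        _ ≤ Real.exp ((40/ε^2) * ∑ j, ‖L (EuclideanSpace.single j (1:ℝ))‖^2) := hscard
  -- final chain
  have hsqrt1 : Real.sqrt (Real.log (N:ℝ)) ≤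
      Real.sqrt ((40/ε^2) * ∑ j, ‖L (EuclideanSpace.single j (1:ℝ))‖^2) :=
    Real.sqrt_le_sqrt hlog
  set Ssq := ∑ j, ‖L (EuclideanSpace.single j (1:ℝ))‖^2 with hSs
  have h40 : Real.sqrt ((40/ε^2) * Ssq) = Real.sqrt 40 * Real.sqrt Ssq / ε := by
    rw [show (40/ε^2) * Ssq = (Real.sqrt 40 * Real.sqrt Ssq / ε)^2 from ?_]
    · exact Real.sqrt_sq (by positivity)
    · rw [div_pow, mul_pow, Real.sq_sqrt (by norm_num : (0:ℝ) ≤ 40),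
        Real.sq_sqrt hSsq_nonneg]
      ring
  have h7 : Real.sqrt 40 ≤ 7 := by
    have h49 : Real.sqrt 49 = 7 := by
      rw [show (49:ℝ) = 7^2 by norm_num, Real.sqrt_sq (by norm_num : (0:ℝ) ≤ 7)]
    rw [← h49]
    exact Real.sqrt_le_sqrt (by norm_num)
  have hS' : Real.sqrt Ssq ≤ sup * Real.sqrt (∑ i, (a i)^2) := by
    calc Real.sqrt Ssq ≤ Real.sqrt (sup^2 * ∑ i, (a i)^2) := Real.sqrt_le_sqrt hSsq_le
      _ = sup * Real.sqrt (∑ i, (a i)^2) := by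
        rw [Real.sqrt_mul (sq_nonneg sup), Real.sqrt_sq hsup_nonneg]
  calc ε * Real.sqrt (Real.log (N:ℝ))
      ≤ ε * (Real.sqrt 40 * Real.sqrt Ssq / ε) := by
        refine mul_le_mul_of_nonneg_left ?_ hε.le
        rw [← h40]
        exact hsqrt1
    _ = Real.sqrt 40 * Real.sqrt Ssq := by field_simp
    _ ≤ 7 * (sup * Real.sqrt (∑ i, (a i)^2)) := by
        refine mul_le_mul h7 hS' (Real.sqrt_nonneg _) (by norm_num)
    _ = 7 * sup * Real.sqrt (∑ i, (a i)^2) := by ring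
end

section
/- The function d satisfies the generalized triangle inequality with constant 4: for all u, w, w̄ ∈ ℝ^M one has d(w, w̄) ≤ 4 · (d(w, u) + d(u, w̄)). -/
lemma stmt5_ptwise (a b c : ℝ) :
    (a - c) ^ 2 * (a ^ 2 + c ^ 2) ≤
      8 * ((a - b) ^ 2 * (a ^ 2 + b ^ 2) + (b - c) ^ 2 * (b ^ 2 + c ^ 2)) := by
  nlinarith [sq_nonneg (a-b), sq_nonneg (b-c), sq_nonneg (a+b), sq_nonneg (b+c),
    sq_nonneg ((a-b)^2 - (b-c)^2), sq_nonneg ((a-b)*(b-c)), sq_nonneg (a*b - b*c),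
    sq_nonneg (a^2 - b^2), sq_nonneg (b^2 - c^2), sq_nonneg ((a^2-b^2)-(b^2-c^2)),
    sq_nonneg ((a^2-b^2)*(b^2-c^2)), sq_nonneg (a-c)]

/-- The quasimetric `d(w,w̄) = (∑ᵢ (wᵢ-w̄ᵢ)²(wᵢ²+w̄ᵢ²))^{1/2}` on `ℝ^M`
satisfies the generalized triangle inequality with constant 4. -/
theorem stmt5 (M : ℕ) (u w wb : Fin M → ℝ) :
    Real.sqrt (∑ i, (w i - wb i) ^ 2 * ((w i) ^ 2 + (wb i) ^ 2)) ≤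
      4 * (Real.sqrt (∑ i, (w i - u i) ^ 2 * ((w i) ^ 2 + (u i) ^ 2))
         + Real.sqrt (∑ i, (u i - wb i) ^ 2 * ((u i) ^ 2 + (wb i) ^ 2))) := by
  set A := ∑ i, (w i - u i) ^ 2 * ((w i) ^ 2 + (u i) ^ 2) with hA
  set B := ∑ i, (u i - wb i) ^ 2 * ((u i) ^ 2 + (wb i) ^ 2) with hB
  have hA0 : 0 ≤ A := Finset.sum_nonneg fun i _ =>
    mul_nonneg (sq_nonneg _) (by positivity)
  have hB0 : 0 ≤ B := Finset.sum_nonneg fun i _ =>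
    mul_nonneg (sq_nonneg _) (by positivity)
  have hsum : (∑ i, (w i - wb i) ^ 2 * ((w i) ^ 2 + (wb i) ^ 2)) ≤ 8 * (A + B) := by
    rw [hA, hB, ← Finset.sum_add_distrib, Finset.mul_sum]
    exact Finset.sum_le_sum fun i _ => stmt5_ptwise (w i) (u i) (wb i)
  calc Real.sqrt (∑ i, (w i - wb i) ^ 2 * ((w i) ^ 2 + (wb i) ^ 2))
      ≤ Real.sqrt (8 * (A + B)) := Real.sqrt_le_sqrt hsum
    _ = Real.sqrt 8 * Real.sqrt (A + B) := Real.sqrt_mul (by norm_num) _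
    _ ≤ 4 * (Real.sqrt A + Real.sqrt B) := by
        have h1 : Real.sqrt (A + B) ≤ Real.sqrt A + Real.sqrt B := by
          have h := Real.sqrt_le_sqrt (show A + B ≤ (Real.sqrt A + Real.sqrt B) ^ 2 by
            nlinarith [Real.sq_sqrt hA0, Real.sq_sqrt hB0,
              mul_nonneg (Real.sqrt_nonneg A) (Real.sqrt_nonneg B)])
          rwa [Real.sqrt_sq (by positivity)] at h
        have h2 : Real.sqrt 8 ≤ 4 := by
          rw [show (4:ℝ) = Real.sqrt 16 by rw [show (16:ℝ) = 4^2 by norm_num, Real.sqrt_sq]; norm_num]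
          exact Real.sqrt_le_sqrt (by norm_num)
        have := mul_le_mul h2 h1 (Real.sqrt_nonneg _) (by norm_num)
        linarith
end

section
/- For every w ∈ ℝ^M and every ρ > 0, the convex hull of the ball B_ρ(w) is contained in the ball B_{4ρ}(w); that is, conv{u ∈ ℝ^M : d(u, w) ≤ ρ} ⊆ {u ∈ ℝ^M : d(u, w) ≤ 4ρ}. -/
/-- Sublevel sets of sums of even powers of affine coordinate functions are convex. -/
lemma conv_aux (M : ℕ) (w c : Fin M → ℝ) (hc : ∀ i, 0 ≤ c i) (n : ℕ) (hn : Even n)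
    (r : ℝ) :
    Convex ℝ {u : Fin M → ℝ | ∑ i, c i * (u i - w i) ^ n ≤ r} := by
  intro u hu v hv a b ha hb hab
  simp only [Set.mem_setOf_eq] at hu hv ⊢
  have step : ∀ i : Fin M,
      c i * ((a • u + b • v) i - w i) ^ n
        ≤ a * (c i * (u i - w i) ^ n) + b * (c i * (v i - w i) ^ n) := by
    intro i
    have hco := (hn.convexOn_pow (𝕜 := ℝ)).2 (Set.mem_univ (u i - w i))
      (Set.mem_univ (v i - w i)) ha hb hab
    have heq : (a • u + b • v) i - w i = a • (u i - w i) + b • (v i - w i) := by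
      simp only [Pi.add_apply, Pi.smul_apply, smul_eq_mul]
      have hb1 : b = 1 - a := by linarith
      subst hb1; ring
    rw [heq]
    have := mul_le_mul_of_nonneg_left hco (hc i)
    simpa [smul_eq_mul, mul_add, mul_left_comm, mul_comm] using this
  calc ∑ i, c i * ((a • u + b • v) i - w i) ^ n
      ≤ ∑ i, (a * (c i * (u i - w i) ^ n) + b * (c i * (v i - w i) ^ n)) :=
        Finset.sum_le_sum fun i _ => step i
    _ = a * (∑ i, c i * (u i - w i) ^ n) + b * (∑ i, c i * (v i - w i) ^ n) := by
        rw [Finset.sum_add_distrib, Finset.mul_sum, Finset.mul_sum]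
    _ ≤ a * r + b * r := by
        gcongr
    _ = r := by rw [← add_mul, hab, one_mul]

/-- For `w ∈ ℝ^M`, `ρ > 0`, the convex hull of the `d`-ball `B_ρ(w)` is
contained in `B_{4ρ}(w)`, where `d(u,w) = (∑ᵢ (uᵢ-wᵢ)²(uᵢ²+wᵢ²))^{1/2}`. -/
theorem stmt6 (M : ℕ) (w : Fin M → ℝ) (ρ : ℝ) (hρ : 0 < ρ) :
    convexHull ℝ
        {u : Fin M → ℝ | Real.sqrt (∑ i, (u i - w i) ^ 2 * ((u i) ^ 2 + (w i) ^ 2)) ≤ ρ}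
      ⊆ {u : Fin M → ℝ | Real.sqrt (∑ i, (u i - w i) ^ 2 * ((u i) ^ 2 + (w i) ^ 2)) ≤ 4 * ρ} := by
  set K : Set (Fin M → ℝ) :=
    {u | ∑ i, (w i) ^ 2 * (u i - w i) ^ 2 ≤ ρ ^ 2} ∩
    {u | ∑ i, (1 : ℝ) * (u i - w i) ^ 4 ≤ 2 * ρ ^ 2} with hK
  have hKconv : Convex ℝ K :=
    (conv_aux M w (fun i => (w i) ^ 2) (fun i => sq_nonneg _) 2 even_two _).inter
      (conv_aux M w (fun _ => (1 : ℝ)) (fun _ => zero_le_one) 4 (by decide) _)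
  have hSK : {u : Fin M → ℝ |
      Real.sqrt (∑ i, (u i - w i) ^ 2 * ((u i) ^ 2 + (w i) ^ 2)) ≤ ρ} ⊆ K := by
    intro u hu
    simp only [Set.mem_setOf_eq] at hu
    have hnn : (0:ℝ) ≤ ∑ i, (u i - w i) ^ 2 * ((u i) ^ 2 + (w i) ^ 2) :=
      Finset.sum_nonneg fun i _ => mul_nonneg (sq_nonneg _) (by positivity)
    have hsum : ∑ i, (u i - w i) ^ 2 * ((u i) ^ 2 + (w i) ^ 2) ≤ ρ ^ 2 := by
      nlinarith [Real.sq_sqrt hnn, Real.sqrt_nonneg (∑ i, (u i - w i) ^ 2 * ((u i) ^ 2 + (w i) ^ 2)), hu]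
    constructor
    · refine le_trans (Finset.sum_le_sum fun i _ => ?_) hsum
      nlinarith [sq_nonneg (u i - w i), sq_nonneg (u i)]
    · have h2 : ∑ i, (1:ℝ) * (u i - w i) ^ 4
          ≤ ∑ i, 2 * ((u i - w i) ^ 2 * ((u i) ^ 2 + (w i) ^ 2)) := by
        refine Finset.sum_le_sum fun i _ => ?_
        nlinarith [sq_nonneg (u i - w i), sq_nonneg (u i + w i), sq_nonneg (u i - w i)]
      simp only [one_mul] at h2 ⊢
      rw [← Finset.mul_sum] at h2
      simp only [Set.mem_setOf_eq]
      nlinarith [hsum]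
  have hKT : K ⊆ {u : Fin M → ℝ |
      Real.sqrt (∑ i, (u i - w i) ^ 2 * ((u i) ^ 2 + (w i) ^ 2)) ≤ 4 * ρ} := by
    rintro u ⟨h1, h2⟩
    simp only [Set.mem_setOf_eq, one_mul] at h1 h2 ⊢
    have hsum : ∑ i, (u i - w i) ^ 2 * ((u i) ^ 2 + (w i) ^ 2)
        ≤ ∑ i, (2 * (u i - w i) ^ 4 + 3 * ((w i) ^ 2 * (u i - w i) ^ 2)) := by
      refine Finset.sum_le_sum fun i _ => ?_
      nlinarith [sq_nonneg (u i - 2 * w i), sq_nonneg (u i - w i),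
        mul_nonneg (sq_nonneg (u i - w i)) (sq_nonneg (u i - 2 * w i))]
    have hsum2 : ∑ i, (u i - w i) ^ 2 * ((u i) ^ 2 + (w i) ^ 2) ≤ (4 * ρ) ^ 2 := by
      rw [Finset.sum_add_distrib, ← Finset.mul_sum, ← Finset.mul_sum] at hsum
      nlinarith [hsum, h1, h2, sq_nonneg ρ, hρ]
    calc Real.sqrt (∑ i, (u i - w i) ^ 2 * ((u i) ^ 2 + (w i) ^ 2))
        ≤ Real.sqrt ((4 * ρ) ^ 2) := Real.sqrt_le_sqrt hsum2
      _ = 4 * ρ := by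
          rw [Real.sqrt_sq (by positivity)]
  exact (convexHull_min hSK hKconv).trans hKT
end

section
/- For every w ∈ ℝ^M, every ρ > 0, and every u in the convex hull of the ball B_ρ(w), one has (Σ_{i=1}^M (u(i) − w(i))² · w(i)²)^{1/2} ≤ ρ and (Σ_{i=1}^M (u(i) − w(i))⁴)^{1/4} ≤ (√2 · ρ)^{1/2}. -/
/-- Sublevel sets of sums of coordinatewise convex functions are convex. -/
lemma sublevel_convex_aux (M : ℕ) (φ : Fin M → ℝ → ℝ) (c : ℝ)
    (hφ : ∀ i, ConvexOn ℝ Set.univ (φ i)) :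
    Convex ℝ {v : Fin M → ℝ | ∑ i, φ i (v i) ≤ c} := by
  intro a ha b hb t s ht hs hts
  simp only [Set.mem_setOf_eq] at ha hb ⊢
  calc ∑ i, φ i ((t • a + s • b) i)
      ≤ ∑ i, (t * φ i (a i) + s * φ i (b i)) := by
        apply Finset.sum_le_sum
        intro i _
        have h := (hφ i).2 (Set.mem_univ (a i)) (Set.mem_univ (b i)) ht hs hts
        simpa [smul_eq_mul] using h
    _ = t * ∑ i, φ i (a i) + s * ∑ i, φ i (b i) := by
        rw [Finset.sum_add_distrib, Finset.mul_sum, Finset.mul_sum]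
    _ ≤ t * c + s * c := by
        exact add_le_add (mul_le_mul_of_nonneg_left ha ht)
          (mul_le_mul_of_nonneg_left hb hs)
    _ = c := by rw [← add_mul, hts, one_mul]

/-- For `w ∈ ℝ^M`, `ρ > 0` and `u` in the convex hull of the `d`-ball
`B_ρ(w)`, one has `(∑ᵢ (uᵢ-wᵢ)² wᵢ²)^{1/2} ≤ ρ` and `(∑ᵢ (uᵢ-wᵢ)⁴)^{1/4} ≤ (√2·ρ)^{1/2}`,
where `d(u,w) = (∑ᵢ (uᵢ-wᵢ)²(uᵢ²+wᵢ²))^{1/2}`. -/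
theorem stmt7 (M : ℕ) (w : Fin M → ℝ) (ρ : ℝ) (hρ : 0 < ρ) (u : Fin M → ℝ)
    (hu : u ∈ convexHull ℝ
      {v : Fin M → ℝ | Real.sqrt (∑ i, (v i - w i) ^ 2 * ((v i) ^ 2 + (w i) ^ 2)) ≤ ρ}) :
    Real.sqrt (∑ i, (u i - w i) ^ 2 * (w i) ^ 2) ≤ ρ ∧
    (∑ i, (u i - w i) ^ 4) ^ ((1 : ℝ) / 4) ≤ Real.sqrt (Real.sqrt 2 * ρ) := by
  set B : Set (Fin M → ℝ) :=
    {v : Fin M → ℝ | Real.sqrt (∑ i, (v i - w i) ^ 2 * ((v i) ^ 2 + (w i) ^ 2)) ≤ ρ} with hBdef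
  -- For v ∈ B, the sum under the sqrt is ≤ ρ²
  have hB : ∀ v ∈ B, ∑ i, (v i - w i) ^ 2 * ((v i) ^ 2 + (w i) ^ 2) ≤ ρ ^ 2 := by
    intro v hv
    have hnn : 0 ≤ ∑ i, (v i - w i) ^ 2 * ((v i) ^ 2 + (w i) ^ 2) :=
      Finset.sum_nonneg fun i _ => by positivity
    have h1 := Real.sq_sqrt hnn
    have h2 : Real.sqrt (∑ i, (v i - w i) ^ 2 * ((v i) ^ 2 + (w i) ^ 2)) ≤ ρ := hv
    nlinarith [Real.sqrt_nonneg (∑ i, (v i - w i) ^ 2 * ((v i) ^ 2 + (w i) ^ 2))]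
  -- convex scalar functions
  have h4 : ConvexOn ℝ Set.univ fun x : ℝ => x ^ 4 := Even.convexOn_pow (by decide)
  have key4 : ∀ r : ℝ, ConvexOn ℝ Set.univ fun x : ℝ => (x - r) ^ 4 := by
    intro r
    refine ⟨convex_univ, ?_⟩
    intro x _ y _ t s ht hs hts
    have h := h4.2 (Set.mem_univ (x - r)) (Set.mem_univ (y - r)) ht hs hts
    simp only [smul_eq_mul] at h ⊢
    have harg : t * (x - r) + s * (y - r) = t * x + s * y - r := by
      linear_combination (-r) * hts
    rw [harg] at h
    exact h
  have key2 : ∀ (r q : ℝ), ConvexOn ℝ Set.univ fun x : ℝ => (x - r) ^ 2 * q ^ 2 := by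
    intro r q
    refine ⟨convex_univ, ?_⟩
    intro x _ y _ t s ht hs hts
    simp only [smul_eq_mul]
    have hkey : t * ((x - r) ^ 2 * q ^ 2) + s * ((y - r) ^ 2 * q ^ 2)
        - (t * x + s * y - r) ^ 2 * q ^ 2 = t * s * ((x - y) * q) ^ 2 := by
      have hs1 : s = 1 - t := by linarith
      subst hs1; ring
    nlinarith [mul_nonneg (mul_nonneg ht hs) (sq_nonneg ((x - y) * q))]
  -- two convex supersets of B
  have hC1 : Convex ℝ {v : Fin M → ℝ | ∑ i, (v i - w i) ^ 2 * (w i) ^ 2 ≤ ρ ^ 2} :=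
    sublevel_convex_aux M (fun i x => (x - w i) ^ 2 * (w i) ^ 2) (ρ ^ 2)
      (fun i => key2 (w i) (w i))
  have hC2 : Convex ℝ {v : Fin M → ℝ | ∑ i, (v i - w i) ^ 4 ≤ 2 * ρ ^ 2} :=
    sublevel_convex_aux M (fun i x => (x - w i) ^ 4) (2 * ρ ^ 2)
      (fun i => key4 (w i))
  have hBC1 : B ⊆ {v : Fin M → ℝ | ∑ i, (v i - w i) ^ 2 * (w i) ^ 2 ≤ ρ ^ 2} := by
    intro v hv
    simp only [Set.mem_setOf_eq]
    calc ∑ i, (v i - w i) ^ 2 * (w i) ^ 2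
        ≤ ∑ i, (v i - w i) ^ 2 * ((v i) ^ 2 + (w i) ^ 2) := by
          apply Finset.sum_le_sum
          intro i _
          nlinarith [sq_nonneg (v i - w i), sq_nonneg (v i)]
      _ ≤ ρ ^ 2 := hB v hv
  have hBC2 : B ⊆ {v : Fin M → ℝ | ∑ i, (v i - w i) ^ 4 ≤ 2 * ρ ^ 2} := by
    intro v hv
    simp only [Set.mem_setOf_eq]
    calc ∑ i, (v i - w i) ^ 4
        ≤ ∑ i, 2 * ((v i - w i) ^ 2 * ((v i) ^ 2 + (w i) ^ 2)) := by
          apply Finset.sum_le_sum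
          intro i _
          nlinarith [mul_nonneg (sq_nonneg (v i - w i)) (sq_nonneg (v i + w i))]
      _ = 2 * ∑ i, (v i - w i) ^ 2 * ((v i) ^ 2 + (w i) ^ 2) := by
          rw [Finset.mul_sum]
      _ ≤ 2 * ρ ^ 2 := by nlinarith [hB v hv]
  have hu1 : ∑ i, (u i - w i) ^ 2 * (w i) ^ 2 ≤ ρ ^ 2 := convexHull_min hBC1 hC1 hu
  have hu2 : ∑ i, (u i - w i) ^ 4 ≤ 2 * ρ ^ 2 := convexHull_min hBC2 hC2 hu
  constructor
  · calc Real.sqrt (∑ i, (u i - w i) ^ 2 * (w i) ^ 2)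
        ≤ Real.sqrt (ρ ^ 2) := Real.sqrt_le_sqrt hu1
      _ = ρ := Real.sqrt_sq hρ.le
  · have hnn : (0 : ℝ) ≤ ∑ i, (u i - w i) ^ 4 :=
      Finset.sum_nonneg fun i _ => by positivity
    have hrhs : Real.sqrt (Real.sqrt 2 * ρ) = (2 * ρ ^ 2) ^ ((1 : ℝ) / 4) := by
      have h2ρ : (2 : ℝ) * ρ ^ 2 = (Real.sqrt 2 * ρ) ^ 2 := by
        rw [mul_pow, Real.sq_sqrt (by norm_num : (2:ℝ) ≥ 0)]
      have hpos : (0 : ℝ) ≤ Real.sqrt 2 * ρ := by positivity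
      rw [h2ρ, ← Real.rpow_natCast (Real.sqrt 2 * ρ) 2, ← Real.rpow_mul hpos,
        Real.sqrt_eq_rpow]
      norm_num
    rw [hrhs]
    exact Real.rpow_le_rpow hnn hu2 (by norm_num)
end

section
/- Let ε₁, …, ε_M be independent Bernoulli random variables taking values ±1 with probability 1/2 each, and let I₁ = {i ∈ {1, …, M} : ε_i = 1}. Then the event (M/2)·(1 − 1/√M) ≤ |I₁| ≤ M/2 has probability at least 1/4. -/
set_option maxHeartbeats 1000000

open MeasureTheory ProbabilityTheory Finset

lemma stmt8_tail_geom (M : ℕ) : ∀ c, 2*c ≤ M + 1 →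
    (M + 1 - 2*c) * (∑ k ∈ range (c+1), M.choose k) ≤ (M + 1 - c) * M.choose c := by
  intro c
  induction c with
  | zero => simp
  | succ c ih =>
    intro hc
    have ih' := ih (by omega)
    have hrel : M.choose (c+1) * (c+1) = M.choose c * (M - c) := Nat.choose_succ_right_eq M c
    obtain ⟨x, hx⟩ : ∃ x, M = 2*c + 1 + x := ⟨M - (2*c+1), by omega⟩
    subst hx
    rw [Finset.sum_range_succ]
    rw [show 2*c+1+x + 1 - 2*c = x + 2 by omega, show 2*c+1+x+1 - c = x+c+2 by omega] at ih'
    rw [show 2*c+1+x - c = x+c+1 by omega] at hrel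
    rw [show 2*c+1+x + 1 - 2*(c+1) = x by omega, show 2*c+1+x+1 - (c+1) = x+c+1 by omega]
    set S := ∑ k ∈ range (c+1), (2*c+1+x).choose k
    set A := (2*c+1+x).choose c
    set B := (2*c+1+x).choose (c+1)
    have main : ((x+c+1)*(x+2)) * (x*(S+B)) ≤ ((x+c+1)*(x+2)) * ((x+c+1)*B) := by
      calc ((x+c+1)*(x+2)) * (x*(S+B))
          = (x*(x+c+1)) * ((x+2)*S) + (x*(x+c+1)*(x+2))*B := by ring
        _ ≤ (x*(x+c+1)) * ((x+c+2)*A) + (x*(x+c+1)*(x+2))*B :=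
            Nat.add_le_add_right (Nat.mul_le_mul_left _ ih') _
        _ = (x*(x+c+2)) * (A*(x+c+1)) + (x*(x+c+1)*(x+2))*B := by ring
        _ = (x*(x+c+2)) * (B*(c+1)) + (x*(x+c+1)*(x+2))*B := by rw [← hrel]
        _ ≤ ((x+c+1)*(x+2)) * (B*(c+1)) + (x*(x+c+1)*(x+2))*B := by
            refine Nat.add_le_add_right (Nat.mul_le_mul_right _ ?_) _
            nlinarith
        _ = ((x+c+1)*(x+2)) * ((x+c+1)*B) := by ring
    exact Nat.le_of_mul_le_mul_left main (by positivity)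

lemma stmt8_half_sum (M : ℕ) : 2 ^ M ≤ 2 * ∑ k ∈ range (M/2 + 1), M.choose k := by
  have h1 : ∑ k ∈ range (M+1), M.choose k = 2 ^ M := Nat.sum_range_choose M
  have hsplit : ∑ k ∈ range (M/2+1), M.choose k + ∑ k ∈ Ico (M/2+1) (M+1), M.choose k
      = ∑ k ∈ range (M+1), M.choose k := Finset.sum_range_add_sum_Ico _ (by omega)
  have hre : ∑ k ∈ Ico (M/2+1) (M+1), M.choose k = ∑ j ∈ range (M - M/2), M.choose j := by
    refine Finset.sum_nbij' (i := fun k => M - k) (j := fun k => M - k) ?_ ?_ ?_ ?_ ?_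
    · intro a ha; simp only [Finset.mem_Ico] at ha; simp only [Finset.mem_range]; omega
    · intro a ha; simp only [Finset.mem_range] at ha; simp only [Finset.mem_Ico]; omega
    · intro a ha; simp only [Finset.mem_Ico] at ha; omega
    · intro a ha; simp only [Finset.mem_range] at ha; omega
    · intro a ha; simp only [Finset.mem_Ico] at ha
      rw [Nat.choose_symm (by omega)]
  have hsub : ∑ j ∈ range (M - M/2), M.choose j ≤ ∑ k ∈ range (M/2+1), M.choose k :=
    Finset.sum_le_sum_of_subset (Finset.range_subset_range.mpr (by omega))
  omega

lemma stmt8_choose_mono_half (M : ℕ) : ∀ b, ∀ a, a ≤ b → b ≤ M/2 → M.choose a ≤ M.choose b := by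
  intro b
  induction b with
  | zero => intro a ha _; simp_all
  | succ b ih =>
    intro a hab hb
    rcases Nat.eq_or_lt_of_le hab with rfl | h
    · exact le_rfl
    · exact le_trans (ih a (by omega) (by omega))
        (Nat.choose_le_succ_of_lt_half_left (by omega))

lemma stmt8_key_comb (M : ℕ) (hM : 1 ≤ M) :
    2 ^ M ≤ 4 * ∑ k ∈ Icc ((M - Nat.sqrt M + 1)/2) (M/2), M.choose k := by
  obtain ⟨q, hq⟩ : ∃ q, q = Nat.sqrt M := ⟨_, rfl⟩
  have hq2 : q * q ≤ M := by rw [hq]; have := Nat.sqrt_le' M; rwa [pow_two] at this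
  have hq3 : M < (q+1) * (q+1) := by
    rw [hq]; have := Nat.lt_succ_sqrt' M; rwa [pow_two] at this
  have hq1 : 1 ≤ q := by
    rcases Nat.eq_zero_or_pos q with h0 | h1
    · rw [h0] at hq3; omega
    · exact h1
  obtain ⟨c, hc⟩ : ∃ c, c = (M - q + 1)/2 := ⟨_, rfl⟩
  obtain ⟨h, hh⟩ : ∃ h, h = M/2 := ⟨_, rfl⟩
  rw [← hq, ← hc, ← hh]
  have hch : c ≤ h := by omega
  have hsplit : ∑ k ∈ range c, M.choose k + ∑ k ∈ Ico c (h+1), M.choose k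
      = ∑ k ∈ range (h+1), M.choose k := Finset.sum_range_add_sum_Ico _ (by omega)
  rw [show Ico c (h+1) = Icc c h from rfl] at hsplit
  set S := ∑ k ∈ range c, M.choose k with hSdef
  set W := ∑ k ∈ Icc c h, M.choose k with hWdef
  have hhalf := stmt8_half_sum M
  rw [← hh] at hhalf
  have hSW : S ≤ W := by
    rcases Nat.eq_zero_or_pos c with hc0 | hc1
    · simp [hSdef, hc0]
    · obtain ⟨d, hd⟩ : ∃ d, d = M - 2*c := ⟨_, rfl⟩
      obtain ⟨n, hn⟩ : ∃ n, n = h - c + 1 := ⟨_, rfl⟩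
      have hdq : q - 1 ≤ d ∧ d ≤ q ∧ d % 2 = M % 2 := by omega
      have hd2 : d * d ≤ M := le_trans (Nat.mul_le_mul hdq.2.1 hdq.2.1) hq2
      have hd3 : M + 2 ≤ (d+2) * (d+2) := by
        have h1 : (q+1) * (q+1) ≤ (d+2) * (d+2) := Nat.mul_le_mul (by omega) (by omega)
        have h3 : (d+2)*(d+2) = d*d + 4*d + 4 := by ring
        have h4 : d % 2 = 0 ∨ d % 2 = 1 := by omega
        have h5 : d*d % 2 = (d%2) * (d%2) % 2 := Nat.mul_mod d d 2
        rcases h4 with h4 | h4 <;> rw [h4] at h5 <;> omega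
      have h2n : d + 1 ≤ 2 * n := by omega
      have htail := stmt8_tail_geom M (c-1) (by omega)
      rw [show c - 1 + 1 = c by omega] at htail
      have hrel : M.choose c * c = M.choose (c-1) * (M - (c-1)) := by
        have := Nat.choose_succ_right_eq M (c-1)
        rwa [show c - 1 + 1 = c by omega] at this
      rw [show M + 1 - 2*(c-1) = d + 3 by omega, show M + 1 - (c-1) = c + d + 2 by omega,
        ← hSdef] at htail
      rw [show M - (c-1) = c + d + 1 by omega] at hrel
      have hWlb : n * M.choose c ≤ W := by
        calc n * M.choose c = ∑ _k ∈ Icc c h, M.choose c := by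
              rw [Finset.sum_const, Nat.card_Icc, smul_eq_mul]; congr 1; omega
          _ ≤ W := Finset.sum_le_sum fun k hk => by
              simp only [Finset.mem_Icc] at hk
              exact stmt8_choose_mono_half M k _ hk.1 (by omega)
      have hstar : c * (c + d + 2) ≤ n * ((d+3) * (c+d+1)) := by
        have he1 : d*d ≤ 2*c + d := by omega
        have he2 : 2*c ≤ d*d + 3*d + 2 := by
          have h3 : (d+2)*(d+2) = d*d + 4*d + 4 := by ring
          omega
        zify at he1 he2 h2n ⊢
        nlinarith [mul_nonneg (show (0:ℤ) ≤ 2*c + d - d*d by linarith)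
            (show (0:ℤ) ≤ d*d + 3*d + 2 - 2*c by linarith),
          mul_nonneg (show (0:ℤ) ≤ d*d + 3*d + 2 - 2*c by linarith)
            (show (0:ℤ) ≤ (d:ℤ)*d + 3 by positivity),
          mul_nonneg (show (0:ℤ) ≤ 2*n - (d+1) by linarith)
            (show (0:ℤ) ≤ ((d:ℤ)+3)*((c:ℤ)+d+1) by positivity),
          mul_nonneg (mul_nonneg (Int.natCast_nonneg d) (Int.natCast_nonneg d))
            (Int.natCast_nonneg d)]
      have hfin : (d+3) * (c+d+1) * S ≤ (d+3) * (c+d+1) * W := by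
        calc (d+3) * (c+d+1) * S = ((d+3) * S) * (c+d+1) := by ring
          _ ≤ ((c+d+2) * M.choose (c-1)) * (c+d+1) := Nat.mul_le_mul_right _ htail
          _ = (c+d+2) * (M.choose (c-1) * (c+d+1)) := by ring
          _ = (c+d+2) * (M.choose c * c) := by rw [← hrel]
          _ = (c * (c+d+2)) * M.choose c := by ring
          _ ≤ (n * ((d+3)*(c+d+1))) * M.choose c := Nat.mul_le_mul_right _ hstar
          _ = (d+3) * (c+d+1) * (n * M.choose c) := by ring
          _ ≤ (d+3) * (c+d+1) * W := Nat.mul_le_mul_left _ hWlb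
      exact Nat.le_of_mul_le_mul_left hfin (by positivity)
  omega

lemma stmt8_bridge (M k : ℕ) (hM : 1 ≤ M) (hk1 : (M - Nat.sqrt M + 1)/2 ≤ k) (hk2 : k ≤ M/2) :
    (M:ℝ)/2 * (1 - 1/Real.sqrt M) ≤ k ∧ (k:ℝ) ≤ (M:ℝ)/2 := by
  constructor
  · have hM0 : (0:ℝ) < M := by exact_mod_cast hM
    have hs0 : 0 < Real.sqrt M := Real.sqrt_pos.mpr hM0
    have hsq : Real.sqrt M * Real.sqrt M = M := Real.mul_self_sqrt (le_of_lt hM0)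
    have hqle : (Nat.sqrt M : ℝ) ≤ Real.sqrt M := by
      apply Real.le_sqrt_of_sq_le
      have := Nat.sqrt_le' M
      exact_mod_cast this
    have hqM : Nat.sqrt M ≤ M := Nat.sqrt_le_self M
    have h2c : (M:ℝ) - Nat.sqrt M ≤ 2*k := by
      have h1 : M - Nat.sqrt M ≤ 2*k := by omega
      have h2 : ((M - Nat.sqrt M : ℕ) : ℝ) ≤ ((2*k : ℕ) : ℝ) := by exact_mod_cast h1
      rw [Nat.cast_sub hqM] at h2
      push_cast at h2
      linarith
    have hdiv : (M:ℝ)/Real.sqrt M = Real.sqrt M := by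
      rw [div_eq_iff (ne_of_gt hs0)]
      exact hsq.symm
    calc (M:ℝ)/2 * (1 - 1/Real.sqrt M) = ((M:ℝ) - (M:ℝ)/Real.sqrt M)/2 := by ring
      _ = ((M:ℝ) - Real.sqrt M)/2 := by rw [hdiv]
      _ ≤ ((M:ℝ) - Nat.sqrt M)/2 := by linarith
      _ ≤ k := by linarith
  · have h1 : 2*k ≤ M := by omega
    have h2 : ((2*k : ℕ) : ℝ) ≤ (M:ℝ) := by exact_mod_cast h1
    push_cast at h2
    linarith

/-- If `ε₁,…,ε_M` are independent Bernoulli ±1 variables and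
`I₁ = {i : εᵢ = 1}`, then `ℙ((M/2)(1 - 1/√M) ≤ |I₁| ≤ M/2) ≥ 1/4`. -/
theorem stmt8 (M : ℕ) (Ω : Type) [MeasurableSpace Ω] (μ : Measure Ω)
    [IsProbabilityMeasure μ] (ε : Fin M → Ω → ℝ)
    (hmeas : ∀ i, Measurable (ε i))
    (hindep : iIndepFun ε μ)
    (hbern : ∀ i, μ {ω | ε i ω = 1} = 1 / 2 ∧ μ {ω | ε i ω = -1} = 1 / 2) :
    1 / 4 ≤
      μ {ω | (M : ℝ) / 2 * (1 - 1 / Real.sqrt M)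
              ≤ ((Finset.univ.filter (fun i => ε i ω = 1)).card : ℝ)
          ∧ ((Finset.univ.filter (fun i => ε i ω = 1)).card : ℝ) ≤ (M : ℝ) / 2} := by
  classical
  by_cases hM : M = 0
  · subst hM
    have hset : {ω : Ω | ((0:ℕ) : ℝ) / 2 * (1 - 1 / Real.sqrt (0:ℕ))
              ≤ ((Finset.univ.filter (fun i : Fin 0 => ε i ω = 1)).card : ℝ)
          ∧ ((Finset.univ.filter (fun i : Fin 0 => ε i ω = 1)).card : ℝ) ≤ ((0:ℕ) : ℝ) / 2}
        = Set.univ := by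
      ext ω
      simp
    rw [hset, measure_univ]
    norm_num [ENNReal.div_le_iff_le_mul]
  · have hM1 : 1 ≤ M := Nat.pos_of_ne_zero hM
    obtain ⟨c, hc⟩ : ∃ c, c = (M - Nat.sqrt M + 1)/2 := ⟨_, rfl⟩
    obtain ⟨h, hh⟩ : ∃ h, h = M/2 := ⟨_, rfl⟩
    set atom : Finset (Fin M) → Set Ω :=
      fun s => ⋂ i, ε i ⁻¹' (if i ∈ s then ({1} : Set ℝ) else {1}ᶜ) with hatom
    have hatom_meas : ∀ s, MeasurableSet (atom s) := by
      intro s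
      refine MeasurableSet.iInter fun i => (hmeas i) ?_
      split
      · exact measurableSet_singleton 1
      · exact (measurableSet_singleton 1).compl
    have hatom_prob : ∀ s, μ (atom s) = (1/2 : ENNReal)^M := by
      intro s
      have h1 := (iIndepFun_iff_measure_inter_preimage_eq_mul.mp hindep) Finset.univ
        (sets := fun i => if i ∈ s then ({1} : Set ℝ) else {1}ᶜ)
        (fun i _ => by split <;> [exact measurableSet_singleton 1;
          exact (measurableSet_singleton 1).compl])
      rw [show (⋂ i ∈ Finset.univ, ε i ⁻¹' (if i ∈ s then ({1} : Set ℝ) else {1}ᶜ))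
          = atom s by simp [hatom]] at h1
      rw [h1]
      rw [show (1/2 : ENNReal)^M = ∏ _i : Fin M, (1/2 : ENNReal) by
        rw [Finset.prod_const, Finset.card_univ, Fintype.card_fin]]
      refine Finset.prod_congr rfl fun i _ => ?_
      by_cases hi : i ∈ s
      · simp only [hi, if_true]
        exact (hbern i).1
      · simp only [hi, if_false]
        have hpre : ε i ⁻¹' ({1} : Set ℝ)ᶜ = {ω | ε i ω = 1}ᶜ := rfl
        have hms : MeasurableSet {ω | ε i ω = 1} := hmeas i (measurableSet_singleton 1)
        rw [hpre, measure_compl hms (measure_ne_top μ _), measure_univ, (hbern i).1]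
        rw [one_div, ENNReal.one_sub_inv_two]
    set B : Finset (Finset (Fin M)) :=
      Finset.univ.filter (fun s => s.card ∈ Icc c h) with hB
    have hdisj : (↑B : Set (Finset (Fin M))).PairwiseDisjoint atom := by
      intro s _ t _ hst
      rw [Function.onFun, Set.disjoint_left]
      intro ω hs ht
      obtain ⟨i, hi⟩ : ∃ i, ¬(i ∈ s ↔ i ∈ t) := by
        by_contra hcon
        push_neg at hcon
        exact hst (Finset.ext fun i => hcon i)
      have h1 := Set.mem_iInter.mp hs i
      have h2 := Set.mem_iInter.mp ht i
      by_cases his : i ∈ s <;> by_cases hit : i ∈ t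
      · exact hi ⟨fun _ => hit, fun _ => his⟩
      · simp only [his, if_true, hit, if_false, Set.mem_preimage,
          Set.mem_singleton_iff, Set.mem_compl_iff] at h1 h2
        exact h2 h1
      · simp only [his, if_false, hit, if_true, Set.mem_preimage,
          Set.mem_singleton_iff, Set.mem_compl_iff] at h1 h2
        exact h1 h2
      · exact hi ⟨fun h => absurd h his, fun h => absurd h hit⟩
    have hsub : (⋃ s ∈ B, atom s) ⊆ {ω | (M : ℝ) / 2 * (1 - 1 / Real.sqrt M)
              ≤ ((Finset.univ.filter (fun i => ε i ω = 1)).card : ℝ)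
          ∧ ((Finset.univ.filter (fun i => ε i ω = 1)).card : ℝ) ≤ (M : ℝ) / 2} := by
      intro ω hω
      simp only [Set.mem_iUnion] at hω
      obtain ⟨s, hsB, hωs⟩ := hω
      have hcard : (Finset.univ.filter (fun i => ε i ω = 1)) = s := by
        ext i
        simp only [Finset.mem_filter, Finset.mem_univ, true_and]
        have h1 := Set.mem_iInter.mp hωs i
        by_cases hi : i ∈ s
        · simp only [hi, if_true, Set.mem_preimage, Set.mem_singleton_iff] at h1
          exact ⟨fun _ => hi, fun _ => h1⟩
        · simp only [hi, if_false, Set.mem_preimage, Set.mem_compl_iff,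
            Set.mem_singleton_iff] at h1
          exact ⟨fun h => absurd h h1, fun h => absurd h hi⟩
      rw [hB] at hsB
      simp only [Finset.mem_filter, Finset.mem_univ, true_and, Finset.mem_Icc] at hsB
      have hbr := stmt8_bridge M s.card hM1 (hc ▸ hsB.1) (hh ▸ hsB.2)
      simp only [Set.mem_setOf_eq, hcard]
      exact hbr
    have hcount : B.card = ∑ k ∈ Icc c h, M.choose k := by
      have hBeq : B = (Icc c h).biUnion (fun k => Finset.powersetCard k Finset.univ) := by
        ext s
        simp only [hB, Finset.mem_filter, Finset.mem_univ, true_and, Finset.mem_biUnion,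
          Finset.mem_powersetCard_univ]
        constructor
        · intro hs; exact ⟨s.card, hs, rfl⟩
        · rintro ⟨k, hk, rfl⟩; exact hk
      rw [hBeq, Finset.card_biUnion]
      · refine Finset.sum_congr rfl fun k _ => ?_
        rw [Finset.card_powersetCard, Finset.card_univ, Fintype.card_fin]
      · intro x _ y _ hxy
        rw [Function.onFun, Finset.disjoint_left]
        intro s hsx hsy
        rw [Finset.mem_powersetCard_univ] at hsx hsy
        exact hxy (hsx ▸ hsy)
    have hunion : μ (⋃ s ∈ B, atom s) = B.card * (1/2 : ENNReal)^M := by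
      rw [measure_biUnion_finset hdisj (fun s _ => hatom_meas s)]
      rw [Finset.sum_congr rfl (fun s _ => hatom_prob s), Finset.sum_const, nsmul_eq_mul]
    have hkey : 2^M ≤ 4 * B.card := by
      rw [hcount, hc, hh]
      exact stmt8_key_comb M hM1
    have hfinal : (1/4 : ENNReal) ≤ B.card * (1/2 : ENNReal)^M := by
      have h2M0 : ((2:ENNReal))^M ≠ 0 := by positivity
      have h2Mt : ((2:ENNReal))^M ≠ ⊤ := by
        exact ENNReal.pow_ne_top (by norm_num)
      have heq : (B.card : ENNReal) * (1/2 : ENNReal)^M = (B.card : ENNReal) / 2^M := by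
        rw [one_div, ← ENNReal.inv_pow, div_eq_mul_inv]
      rw [heq, ENNReal.le_div_iff_mul_le (Or.inl h2M0) (Or.inl h2Mt)]
      have hcast : ((2:ENNReal))^M ≤ 4 * (B.card : ENNReal) := by
        have := (Nat.cast_le (α := ENNReal)).mpr hkey
        push_cast at this
        exact_mod_cast this
      calc (1/4 : ENNReal) * 2^M ≤ 1/4 * (4 * B.card) := by
            exact mul_le_mul_right hcast _
        _ = (1/4 * 4) * B.card := by rw [mul_assoc]
        _ = 1 * B.card := by
            rw [one_div, ENNReal.inv_mul_cancel (by norm_num) (by norm_num)]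
        _ = (B.card : ENNReal) := by rw [one_mul]
    calc (1/4 : ENNReal) ≤ B.card * (1/2 : ENNReal)^M := hfinal
      _ = μ (⋃ s ∈ B, atom s) := hunion.symm
      _ ≤ _ := measure_mono hsub
end
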